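/- arXiv:1711.06750 — 2 statements merged into one kernel-verified Lean document; each statement's English description precedes it below -/
import Mathlib

section
/- Let A be a Banach algebra with a two-sided approximate identity bounded by K which has the strong property (B) with constant C. Let X be a Banach space and π : A → B(X) a continuous algebra homomorphism which is non-degenerate (the linear span of {π(a)x : a ∈ A, x ∈ X} is dense in X). Let π(A)′ = {S ∈ B(X) : Sπ(a) = π(a)S for all a ∈ A}. Suppose the set {δ_L : L ∈ B(X)} of inner derivations, where δ_L(a) = π(a)L − Lπ(a), is a closed subspace of the bounded operators from A to B(X) (equivalently, H¹(A, B(X)) is a Banach space), and let M > 0 satisfy dist(L, π(A)′) ≤ M‖δ_L‖ for all L ∈ B(X). Then for every T ∈ B(X): dist(T, π(A)′) ≤ M·C·K²·‖π‖²·sup_{‖x‖≤1} dist(Tx, {Sx : S ∈ π(A)′}). In particular π(A)′ is hyperreflexive with constant at most MCK²‖π‖². -/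
/-
Let `β = sup_{‖x‖ ≤ 1} dist(Tx, π(A)′x)`. For `S ∈ π(A)′` and `ab = 0` we have
`π(a) S π(b) = S π(ab) = 0`, so `φ(a, b) = π(a) T π(b)` equals `π(a) (T - S) π(b)`, whence
`‖φ(a, b)‖ ≤ ‖π‖² β ‖a‖ ‖b‖`. Strong property (B) then bounds
`φ(e_i b, e_j) - φ(e_i, b e_j) = π(e_i) δ_T(b) π(e_j)` by `C ‖π‖² β K² ‖b‖`. By non-degeneracy
`π(e_i) → 1` strongly, so `‖δ_T‖ ≤ C K² ‖π‖² β`, and `dist(T, π(A)′) ≤ M ‖δ_T‖` concludes.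
-/

/-- A Banach algebra `A` has the strong property (B) with constant `r` if for every
Banach space `X`, every bounded bilinear map `φ : A × A → X` and every `α ≥ 0` such that
`‖φ(a,b)‖ ≤ α‖a‖‖b‖` whenever `ab = 0`, one has
`‖φ(ab,c) − φ(a,bc)‖ ≤ rα‖a‖‖b‖‖c‖` for all `a, b, c`. -/
def StrongPropertyB (A : Type*) [NonUnitalNormedRing A] [NormedSpace ℂ A]
    [IsScalarTower ℂ A A] [SMulCommClass ℂ A A] (r : ℝ) : Prop :=
  ∀ (X : Type) [NormedAddCommGroup X] [NormedSpace ℂ X] [CompleteSpace X]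
    (φ : A →L[ℂ] A →L[ℂ] X) (α : ℝ), 0 ≤ α →
    (∀ a b : A, a * b = 0 → ‖φ a b‖ ≤ α * ‖a‖ * ‖b‖) →
    ∀ a b c : A, ‖φ (a * b) c - φ a (b * c)‖ ≤ r * α * ‖a‖ * ‖b‖ * ‖c‖

noncomputable section

open Filter Topology

open Metric Pointwise

section Operators

variable {𝕜 E F : Type*} [NontriviallyNormedField 𝕜]
  [NormedAddCommGroup E] [NormedSpace 𝕜 E] [NormedAddCommGroup F] [NormedSpace 𝕜 F]
  {ι : Type*} {l : Filter ι}

theorem ContinuousLinearMap.tendsto_apply_of_dense_span {P : ι → E →L[𝕜] F} {R : ℝ}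
    (hR : ∀ i, ‖P i‖ ≤ R) (Q : E →L[𝕜] F) {s : Set E}
    (hs : Dense (Submodule.span 𝕜 s : Set E))
    (h : ∀ y ∈ s, Tendsto (fun i => P i y) l (𝓝 (Q y))) (y : E) :
    Tendsto (fun i => P i y) l (𝓝 (Q y)) := by
  have hequi : Equicontinuous ((↑) ∘ P) :=
    ((NormedSpace.equicontinuous_TFAE P).out 1 5).2 (⟨R, hR⟩ : ∃ C, ∀ i, ‖P i‖ ≤ C)
  have hspan : (Submodule.span 𝕜 s : Set E) ⊆ {y | Tendsto (fun i => P i y) l (𝓝 (Q y))} := by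
    intro y hy
    induction hy using Submodule.span_induction with
    | mem y hy => exact h y hy
    | zero => simpa using tendsto_const_nhds
    | add u v _ _ hu hv => simpa using hu.add hv
    | smul c u _ hu => simpa using hu.const_smul c
  exact (hequi.isClosed_setOfPred_tendsto Q.continuous).closure_subset_iff.2 hspan (hs y)

theorem ContinuousLinearMap.norm_apply_le_opNorm_mul_infDist (f : E →L[𝕜] F) {s : Set E}
    (hs : s.Nonempty) (hf : ∀ w ∈ s, f w = 0) (z : E) : ‖f z‖ ≤ ‖f‖ * infDist z s := by
  have : Nonempty s := hs.to_subtype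
  rw [infDist_eq_iInf, Real.mul_iInf_of_nonneg (norm_nonneg f)]
  refine le_ciInf fun ⟨w, hw⟩ => ?_
  calc ‖f z‖ = ‖f (z - w)‖ := by rw [map_sub, hf w hw, sub_zero]
    _ ≤ ‖f‖ * dist z w := by rw [dist_eq_norm]; exact f.le_opNorm _

theorem ContinuousLinearMap.opNorm_le_of_norm_comp_comp_le [l.NeBot] {P : ι → E →L[𝕜] E}
    (hP : ∀ x, Tendsto (fun i => P i x) l (𝓝 x)) (D : E →L[𝕜] E) {c : ℝ} (hc : 0 ≤ c)
    (h : ∀ i j, ‖(P i).comp (D.comp (P j))‖ ≤ c) : ‖D‖ ≤ c := by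
  refine D.opNorm_le_bound hc fun x => ?_
  have hj : ∀ j, ‖D (P j x)‖ ≤ c * ‖x‖ := fun j =>
    le_of_tendsto' (hP _).norm fun i => ((P i).comp (D.comp (P j))).le_of_opNorm_le (h i j) x
  exact le_of_tendsto' ((D.continuous.tendsto x).comp (hP x)).norm hj

end Operators

section Representation

variable {𝕜 A X : Type*} [NontriviallyNormedField 𝕜] [NonUnitalNormedRing A] [NormedSpace 𝕜 A]
  [NormedAddCommGroup X] [NormedSpace 𝕜 X] {ι : Type*} {l : Filter ι}

theorem tendsto_apply_of_approxUnit {π : A →L[𝕜] X →L[𝕜] X}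
    (hπmul : ∀ a b : A, π (a * b) = (π a).comp (π b))
    (hπnd : Dense (Submodule.span 𝕜 {y : X | ∃ (a : A) (x : X), π a x = y} : Set X))
    {e : ι → A} {K : ℝ} (heK : ∀ i, ‖e i‖ ≤ K) (he : ∀ a, Tendsto (fun i => e i * a) l (𝓝 a))
    (y : X) : Tendsto (fun i => π (e i) y) l (𝓝 y) := by
  refine ContinuousLinearMap.tendsto_apply_of_dense_span
    (fun i => π.le_opNorm_of_le (heK i)) (ContinuousLinearMap.id 𝕜 X) hπnd ?_ y
  rintro _ ⟨a, x, rfl⟩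
  have hcont : Continuous fun c : A => π c x := π.continuous.clm_apply continuous_const
  simpa [Function.comp_def, hπmul] using (hcont.tendsto a).comp (he a)

end Representation

section LocalDistance

variable {𝕜 E F : Type*} [RCLike 𝕜]
  [NormedAddCommGroup E] [NormedSpace 𝕜 E] [NormedAddCommGroup F] [NormedSpace 𝕜 F]

def localDist (𝒮 : Set (E →L[𝕜] F)) (T : E →L[𝕜] F) : ℝ :=
  sSup {d : ℝ | ∃ x : E, ‖x‖ ≤ 1 ∧ d = infDist (T x) ((fun S : E →L[𝕜] F => S x) '' 𝒮)}

theorem localDist_nonneg (𝒮 : Set (E →L[𝕜] F)) (T : E →L[𝕜] F) : 0 ≤ localDist 𝒮 T :=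
  Real.sSup_nonneg fun _ ⟨_, _, hd⟩ => hd ▸ infDist_nonneg

theorem infDist_apply_le_localDist_mul {𝒮 : Set (E →L[𝕜] F)} (h0 : 0 ∈ 𝒮) (T : E →L[𝕜] F)
    (y : E) : infDist (T y) ((fun S : E →L[𝕜] F => S y) '' 𝒮) ≤ localDist 𝒮 T * ‖y‖ := by
  have hmem : ∀ x : E, (0 : F) ∈ (fun S : E →L[𝕜] F => S x) '' 𝒮 := fun x => ⟨0, h0, rfl⟩
  rcases eq_or_ne y 0 with rfl | hy
  · simpa using (infDist_zero_of_mem (hmem 0)).le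
  have hbdd : BddAbove {d : ℝ | ∃ x : E, ‖x‖ ≤ 1 ∧
      d = infDist (T x) ((fun S : E →L[𝕜] F => S x) '' 𝒮)} := by
    refine ⟨‖T‖, ?_⟩
    rintro _ ⟨x, hx, rfl⟩
    calc infDist (T x) _ ≤ dist (T x) 0 := infDist_le_dist_of_mem (hmem x)
      _ ≤ ‖T‖ := by simpa using T.le_opNorm_of_le hx
  set c : 𝕜 := (‖y‖ : 𝕜) with hc_def
  have hc : c ≠ 0 := by simpa [c] using hy
  set x := c⁻¹ • y
  have hyx : y = c • x := by simp [x, smul_inv_smul₀ hc]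
  have himage : (fun S : E →L[𝕜] F => S y) '' 𝒮 = c • (fun S : E →L[𝕜] F => S x) '' 𝒮 := by
    rw [← Set.image_smul, Set.image_image, hyx]
    simp only [map_smul]
  have hx : ‖x‖ = 1 := by simp [x, c, norm_smul, hy]
  have hcn : ‖c‖ = ‖y‖ := by rw [hc_def, RCLike.norm_ofReal, abs_norm]
  calc infDist (T y) _ = ‖c‖ * infDist (T x) ((fun S : E →L[𝕜] F => S x) '' 𝒮) := by
        rw [himage, hyx, map_smul, infDist_smul₀ hc]
    _ ≤ ‖y‖ * localDist 𝒮 T := by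
        rw [hcn]
        gcongr
        exact le_csSup hbdd ⟨x, hx.le, rfl⟩
    _ = localDist 𝒮 T * ‖y‖ := mul_comm _ _

end LocalDistance

section Commutant

variable {𝕜 A X : Type*} [RCLike 𝕜] [NonUnitalNormedRing A] [NormedSpace 𝕜 A]
  [NormedAddCommGroup X] [NormedSpace 𝕜 X]

def commutant (π : A →L[𝕜] X →L[𝕜] X) : Set (X →L[𝕜] X) :=
  {S | ∀ a : A, S.comp (π a) = (π a).comp S}

theorem zero_mem_commutant (π : A →L[𝕜] X →L[𝕜] X) : 0 ∈ commutant π := fun a => by simp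

def sandwich (π : A →L[𝕜] X →L[𝕜] X) (T : X →L[𝕜] X) : A →L[𝕜] A →L[𝕜] X →L[𝕜] X :=
  (ContinuousLinearMap.mul 𝕜 (X →L[𝕜] X)).bilinearComp π ((ContinuousLinearMap.mul 𝕜 _ T).comp π)

theorem sandwich_apply (π : A →L[𝕜] X →L[𝕜] X) (T : X →L[𝕜] X) (a b : A) :
    sandwich π T a b = (π a).comp (T.comp (π b)) :=
  rfl

theorem norm_sandwich_le_of_mul_eq_zero {π : A →L[𝕜] X →L[𝕜] X}
    (hπmul : ∀ a b : A, π (a * b) = (π a).comp (π b)) (T : X →L[𝕜] X) {a b : A}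
    (hab : a * b = 0) :
    ‖sandwich π T a b‖ ≤ ‖π‖ ^ 2 * localDist (commutant π) T * ‖a‖ * ‖b‖ := by
  have hβ := localDist_nonneg (commutant π) T
  refine ContinuousLinearMap.opNorm_le_bound _ (by positivity) fun x => ?_
  set y := π b x
  have hvanish : ∀ w ∈ (fun S : X →L[𝕜] X => S y) '' commutant π, π a w = 0 := by
    have hab_x : π a y = 0 := by
      rw [← ContinuousLinearMap.comp_apply, ← hπmul, hab, map_zero]
      rfl
    rintro _ ⟨S, hS, rfl⟩
    change ((π a).comp S) y = 0
    rw [← hS a, ContinuousLinearMap.comp_apply, hab_x, map_zero]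
  calc ‖π a (T y)‖
      ≤ ‖π a‖ * infDist (T y) ((fun S : X →L[𝕜] X => S y) '' commutant π) :=
        (π a).norm_apply_le_opNorm_mul_infDist
          ((Set.nonempty_of_mem (zero_mem_commutant π)).image _) hvanish _
    _ ≤ ‖π a‖ * (localDist (commutant π) T * ‖y‖) := by
        gcongr
        exact infDist_apply_le_localDist_mul (zero_mem_commutant π) T y
    _ ≤ (‖π‖ * ‖a‖) * (localDist (commutant π) T * (‖π‖ * ‖b‖ * ‖x‖)) := by
        gcongr
        · exact π.le_opNorm a
        · exact π.le_opNorm₂ b x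
    _ = ‖π‖ ^ 2 * localDist (commutant π) T * ‖a‖ * ‖b‖ * ‖x‖ := by ring

end Commutant

theorem norm_commutator_le_of_strongPropertyB {A : Type*} [NonUnitalNormedRing A]
    [NormedSpace ℂ A] [IsScalarTower ℂ A A] [SMulCommClass ℂ A A] {C : ℝ} (hC : 0 ≤ C)
    (hB : StrongPropertyB A C) {X : Type} [NormedAddCommGroup X] [NormedSpace ℂ X]
    [CompleteSpace X] {π : A →L[ℂ] X →L[ℂ] X} (hπmul : ∀ a b : A, π (a * b) = (π a).comp (π b))
    (hπnd : Dense (Submodule.span ℂ {y : X | ∃ (a : A) (x : X), π a x = y} : Set X))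
    {ι : Type*} {l : Filter ι} [l.NeBot] {e : ι → A} {K : ℝ} (heK : ∀ i, ‖e i‖ ≤ K)
    (he : ∀ a, Tendsto (fun i => e i * a) l (𝓝 a)) (T : X →L[ℂ] X) (b : A) :
    ‖(π b).comp T - T.comp (π b)‖ ≤
      C * (‖π‖ ^ 2 * localDist (commutant π) T) * K ^ 2 * ‖b‖ := by
  set α := ‖π‖ ^ 2 * localDist (commutant π) T
  have hα : 0 ≤ α := by have := localDist_nonneg (commutant π) T; positivity
  have hK : 0 ≤ K := (norm_nonneg _).trans (heK l.nonempty_of_neBot.some)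
  have hφ := hB _ (sandwich π T) α hα fun a b hab => norm_sandwich_le_of_mul_eq_zero hπmul T hab
  refine ContinuousLinearMap.opNorm_le_of_norm_comp_comp_le
    (tendsto_apply_of_approxUnit hπmul hπnd heK he) _ (by positivity) fun i j => ?_
  have hsplit : (π (e i)).comp (((π b).comp T - T.comp (π b)).comp (π (e j))) =
      sandwich π T (e i * b) (e j) - sandwich π T (e i) (b * e j) := by
    simp only [sandwich_apply, hπmul, ContinuousLinearMap.comp_assoc,
      ContinuousLinearMap.sub_comp, ContinuousLinearMap.comp_sub]
  rw [hsplit]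
  calc _ ≤ C * α * ‖e i‖ * ‖b‖ * ‖e j‖ := hφ _ _ _
    _ ≤ C * α * K * ‖b‖ * K := by gcongr <;> exact heK _
    _ = C * α * K ^ 2 * ‖b‖ := by ring

theorem stmt_10_general (A : Type*) [NonUnitalNormedRing A] [NormedSpace ℂ A]
    [IsScalarTower ℂ A A] [SMulCommClass ℂ A A]
    -- `A` has a two-sided approximate identity bounded by `K`
    (K : ℝ)
    (hK : ∃ (ι : Type) (lf : Filter ι), lf.NeBot ∧ ∃ e : ι → A,
      (∀ i, ‖e i‖ ≤ K) ∧ ∀ a : A,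
        Tendsto (fun i => e i * a) lf (𝓝 a) ∧ Tendsto (fun i => a * e i) lf (𝓝 a))
    (C : ℝ) (hC : 0 < C) (hB : StrongPropertyB A C)
    (X : Type) [NormedAddCommGroup X] [NormedSpace ℂ X] [CompleteSpace X]
    -- a continuous representation of `A` on `X`
    (π : A →L[ℂ] X →L[ℂ] X)
    (hπmul : ∀ a b : A, π (a * b) = (π a).comp (π b))
    -- non-degeneracy
    (hπnd : Dense (Submodule.span ℂ {y : X | ∃ (a : A) (x : X), π a x = y} : Set X))
    -- the map `L ↦ δ_L`, `δ_L(a) = π(a)L − Lπ(a)`, on inner derivations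
    (Δ : (X →L[ℂ] X) → (A →L[ℂ] X →L[ℂ] X))
    (hΔ : ∀ (L : X →L[ℂ] X) (a : A), Δ L a = (π a).comp L - L.comp (π a))
    (M : ℝ) (hM : 0 < M)
    (hMdist : ∀ L : X →L[ℂ] X,
      Metric.infDist L {S : X →L[ℂ] X | ∀ a : A, S.comp (π a) = (π a).comp S} ≤ M * ‖Δ L‖) :
    ∀ T : X →L[ℂ] X,
      Metric.infDist T {S : X →L[ℂ] X | ∀ a : A, S.comp (π a) = (π a).comp S} ≤
        M * C * K ^ 2 * ‖π‖ ^ 2 *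
          sSup {d : ℝ | ∃ x : X, ‖x‖ ≤ 1 ∧
            d = Metric.infDist (T x)
              ((fun S : X →L[ℂ] X => S x) ''
                {S : X →L[ℂ] X | ∀ a : A, S.comp (π a) = (π a).comp S})} := by
  intro T
  obtain ⟨ι, l, _, e, heK, he⟩ := hK
  have hβ := localDist_nonneg (commutant π) T
  have hΔT : ‖Δ T‖ ≤ C * (‖π‖ ^ 2 * localDist (commutant π) T) * K ^ 2 :=
    ContinuousLinearMap.opNorm_le_bound _ (by positivity) fun b => hΔ T b ▸
      norm_commutator_le_of_strongPropertyB hC.le hB hπmul hπnd heK (fun a => (he a).1) T b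
  calc _ ≤ M * ‖Δ T‖ := hMdist T
    _ ≤ M * (C * (‖π‖ ^ 2 * localDist (commutant π) T) * K ^ 2) := by gcongr
    _ = _ := by unfold localDist commutant; ring

theorem stmt_10 (A : Type*) [NonUnitalNormedRing A] [NormedSpace ℂ A]
    [IsScalarTower ℂ A A] [SMulCommClass ℂ A A] [CompleteSpace A]
    -- `A` has a two-sided approximate identity bounded by `K`
    (K : ℝ)
    (hK : ∃ (ι : Type) (lf : Filter ι), lf.NeBot ∧ ∃ e : ι → A,
      (∀ i, ‖e i‖ ≤ K) ∧ ∀ a : A,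
        Tendsto (fun i => e i * a) lf (𝓝 a) ∧ Tendsto (fun i => a * e i) lf (𝓝 a))
    (C : ℝ) (hC : 0 < C) (hB : StrongPropertyB A C)
    (X : Type) [NormedAddCommGroup X] [NormedSpace ℂ X] [CompleteSpace X]
    -- a continuous representation of `A` on `X`
    (π : A →L[ℂ] X →L[ℂ] X)
    (hπmul : ∀ a b : A, π (a * b) = (π a).comp (π b))
    -- non-degeneracy
    (hπnd : Dense (Submodule.span ℂ {y : X | ∃ (a : A) (x : X), π a x = y} : Set X))
    -- the map `L ↦ δ_L`, `δ_L(a) = π(a)L − Lπ(a)`, on inner derivations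
    (Δ : (X →L[ℂ] X) → (A →L[ℂ] X →L[ℂ] X))
    (hΔ : ∀ (L : X →L[ℂ] X) (a : A), Δ L a = (π a).comp L - L.comp (π a))
    -- `H¹(A, B(X))` is a Banach space: the set of inner derivations is closed
    (hclosed : IsClosed (Set.range Δ))
    (M : ℝ) (hM : 0 < M)
    (hMdist : ∀ L : X →L[ℂ] X,
      Metric.infDist L {S : X →L[ℂ] X | ∀ a : A, S.comp (π a) = (π a).comp S} ≤ M * ‖Δ L‖) :
    ∀ T : X →L[ℂ] X,
      Metric.infDist T {S : X →L[ℂ] X | ∀ a : A, S.comp (π a) = (π a).comp S} ≤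
        M * C * K ^ 2 * ‖π‖ ^ 2 *
          sSup {d : ℝ | ∃ x : X, ‖x‖ ≤ 1 ∧
            d = Metric.infDist (T x)
              ((fun S : X →L[ℂ] X => S x) ''
                {S : X →L[ℂ] X | ∀ a : A, S.comp (π a) = (π a).comp S})} :=
  stmt_10_general A K hK C hC hB X π hπmul hπnd Δ hΔ M hM hMdist
end
end

section
/- Let 0 < c < 1, let V = [−c, c] ⊆ 𝕋 = ℝ/2πℤ with λ(V) = c/π for the normalized Haar measure λ, let f(s) = e^{is} − 1, and let v = f·((1/λ(V))·(1_{V+V} ∗ 1_V)). Then ‖v‖_{L²(𝕋)} ≤ 3c·√(2c/π), where the L²-norm is taken with respect to the normalized Haar measure. -/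
open MeasureTheory AddCircle

noncomputable section

local instance : Fact (0 < 2 * Real.pi) := ⟨by positivity⟩

/-- The circle `𝕋 = ℝ/2πℤ`. -/
abbrev Circle2Pi : Type := AddCircle (2 * Real.pi)

/-- Membership in the Fourier algebra `A(𝕋)`: continuity together with absolute
summability of the Fourier coefficients. -/
def MemFourierAlg (f : Circle2Pi → ℂ) : Prop :=
  Continuous f ∧ Summable fun n : ℤ => ‖fourierCoeff f n‖

/-- The norm of the Fourier algebra `A(𝕋)`: `‖f‖ = ∑ₙ |f̂(n)|`. -/
def fourierAlgNorm (f : Circle2Pi → ℂ) : ℝ :=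
  ∑' n : ℤ, ‖fourierCoeff f n‖

/-- Normalized convolution on `𝕋` (with respect to the probability Haar measure). -/
def circleConv (f g : Circle2Pi → ℂ) : Circle2Pi → ℂ :=
  fun x => ∫ y : Circle2Pi, f y * g (x - y) ∂haarAddCircle


open scoped Pointwise

/-! The function `φ = (π / c) (1_{V+V} ∗ 1_V)` takes values in `[0, 1]`, because
`1_{V+V} ∗ 1_V ≤ λ(V) ≤ c / π`, and vanishes outside `V + V + V`, the image of `[-3c, 3c]`, where
`|e^{is} - 1| ≤ |s| ≤ 3c`. Hence `|v|² ≤ 9c² φ² ≤ 9c² φ`, and integrating,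
`‖v‖₂² ≤ 9c² (π / c) λ(V + V) λ(V) ≤ 18 c³ / π`. -/

open Set Metric
open scoped Convolution

section Indicator

variable {α M : Type*} [Zero M] [One M] [Preorder M] [ZeroLEOneClass M]

lemma indicator_one_nonneg (s : Set α) (x : α) : 0 ≤ s.indicator (1 : α → M) x :=
  indicator_nonneg (fun _ _ => zero_le_one) x

lemma indicator_one_le_one (s : Set α) (x : α) : s.indicator (1 : α → M) x ≤ 1 :=
  indicator_le_self' (fun _ _ => zero_le_one) x

end Indicator

lemma integrable_indicator_one {α : Type*} [MeasurableSpace α] {μ : Measure α} {s : Set α}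
    (hs : MeasurableSet s) (hμs : μ s ≠ ⊤) : Integrable (s.indicator (1 : α → ℝ)) μ :=
  (integrable_indicator_iff hs).2 (integrableOn_const hμs)

lemma integral_norm_mul_ofReal_sq_le {α 𝕜 : Type*} [MeasurableSpace α] [RCLike 𝕜]
    {μ : Measure α} {F : α → 𝕜} {h : α → ℝ} {M : ℝ} (hh : Integrable h μ)
    (h0 : ∀ x, 0 ≤ h x) (h1 : ∀ x, h x ≤ 1) (hF : ∀ x, h x ≠ 0 → ‖F x‖ ≤ M) :
    ∫ x, ‖F x * h x‖ ^ 2 ∂μ ≤ M ^ 2 * ∫ x, h x ∂μ := by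
  rw [← integral_const_mul]
  refine integral_mono_of_nonneg (Filter.Eventually.of_forall fun _ => by positivity)
    (hh.const_mul _) (Filter.Eventually.of_forall fun x => ?_)
  by_cases hx : h x = 0
  · simp [hx]
  calc ‖F x * h x‖ ^ 2 = ‖F x‖ ^ 2 * h x ^ 2 := by
        rw [norm_mul, RCLike.norm_ofReal, abs_of_nonneg (h0 x), mul_pow]
    _ ≤ M ^ 2 * h x :=
        mul_le_mul (pow_le_pow_left₀ (norm_nonneg _) (hF x hx) 2)
          (pow_le_of_le_one (h0 x) (h1 x) two_ne_zero) (sq_nonneg _) (sq_nonneg _)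

section Convolution

variable {G : Type*} [AddCommGroup G] [MeasurableSpace G] {μ : Measure G} {s t : Set G}

lemma convolution_indicator_one_nonneg (x : G) :
    0 ≤ (s.indicator 1 ⋆[ContinuousLinearMap.mul ℝ ℝ, μ] t.indicator (1 : G → ℝ)) x :=
  integral_nonneg fun _ => mul_nonneg (indicator_one_nonneg _ _) (indicator_one_nonneg _ _)

variable [MeasurableAdd₂ G] [MeasurableNeg G] [μ.IsAddLeftInvariant]

lemma convolution_indicator_one_le [μ.IsNegInvariant]
    (ht : MeasurableSet t) (hμt : μ t ≠ ⊤) (x : G) :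
    (s.indicator 1 ⋆[ContinuousLinearMap.mul ℝ ℝ, μ] t.indicator (1 : G → ℝ)) x ≤ μ.real t := by
  calc (s.indicator 1 ⋆[ContinuousLinearMap.mul ℝ ℝ, μ] t.indicator (1 : G → ℝ)) x
      ≤ ∫ y, t.indicator (1 : G → ℝ) (x - y) ∂μ := by
        refine integral_mono_of_nonneg
          (Filter.Eventually.of_forall fun _ => mul_nonneg (indicator_one_nonneg _ _) (indicator_one_nonneg _ _))
          ((integrable_indicator_one ht hμt).comp_sub_left x)
          (Filter.Eventually.of_forall fun y => ?_)
        exact mul_le_of_le_one_left (indicator_one_nonneg _ _) (indicator_one_le_one _ _)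
    _ = μ.real t := by rw [integral_sub_left_eq_self, integral_indicator_one ht]

variable [SFinite μ]

lemma integral_convolution_indicator_one (hs : MeasurableSet s) (ht : MeasurableSet t)
    (hμs : μ s ≠ ⊤) (hμt : μ t ≠ ⊤) :
    ∫ x, (s.indicator 1 ⋆[ContinuousLinearMap.mul ℝ ℝ, μ] t.indicator (1 : G → ℝ)) x ∂μ =
      μ.real s * μ.real t := by
  rw [integral_convolution _ (integrable_indicator_one hs hμs) (integrable_indicator_one ht hμt),
    integral_indicator_one hs, integral_indicator_one ht]
  rfl

lemma integral_norm_mul_convolution_indicator_one_sq_le {𝕜 : Type*} [RCLike 𝕜] [μ.IsNegInvariant]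
    {F : G → 𝕜} {K M : ℝ} (hs : MeasurableSet s) (ht : MeasurableSet t) (hμs : μ s ≠ ⊤)
    (hμt : μ t ≠ ⊤) (hK : μ.real t ≤ K) (hK0 : 0 < K) (hF : ∀ x ∈ s + t, ‖F x‖ ≤ M) :
    ∫ x, ‖F x * ((K⁻¹ * (s.indicator 1 ⋆[ContinuousLinearMap.mul ℝ ℝ, μ]
      t.indicator (1 : G → ℝ)) x : ℝ) : 𝕜)‖ ^ 2 ∂μ ≤ M ^ 2 * (μ.real s * μ.real t / K) := by
  set g := s.indicator 1 ⋆[ContinuousLinearMap.mul ℝ ℝ, μ] t.indicator (1 : G → ℝ)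
  have hg : Integrable g μ :=
    (integrable_indicator_one hs hμs).integrable_convolution _ (integrable_indicator_one ht hμt)
  have hF' : ∀ x, K⁻¹ * g x ≠ 0 → ‖F x‖ ≤ M := fun x hx =>
    hF x <| add_subset_add support_indicator_subset support_indicator_subset <|
      support_convolution_subset _ (Function.mem_support.2 (right_ne_zero_of_mul hx))
  refine (integral_norm_mul_ofReal_sq_le (hg.const_mul _)
    (fun x => mul_nonneg (inv_nonneg.2 hK0.le) (convolution_indicator_one_nonneg x))
    (fun x => inv_mul_le_one_of_le₀ ((convolution_indicator_one_le ht hμt x).trans hK) hK0.le)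
    hF').trans_eq ?_
  rw [integral_const_mul, integral_convolution_indicator_one hs ht hμs hμt, inv_mul_eq_div]

end Convolution

namespace AddCircle

variable {T : ℝ}

lemma coe_image_Icc_add_coe_image_Icc {a b : ℝ} (ha : 0 ≤ a) (hb : 0 ≤ b) :
    ((↑) '' Icc (-a) a : Set (AddCircle T)) + (↑) '' Icc (-b) b =
      (↑) '' Icc (-(a + b)) (a + b) := by
  rw [neg_add, ← Set.Icc_add_Icc (neg_le_self ha) (neg_le_self hb)]
  exact (Set.image_add (QuotientAddGroup.mk' _)).symm

lemma coe_image_Icc_subset_closedBall (r : ℝ) :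
    ((↑) '' Icc (-r) r : Set (AddCircle T)) ⊆ closedBall 0 r := by
  rintro _ ⟨t, ht, rfl⟩
  rw [mem_closedBall, dist_zero_right]
  exact QuotientAddGroup.norm_mk_le_norm.trans (abs_le.2 ht)

variable [Fact (0 < T)]

lemma haarAddCircle_real_closedBall_le (x : AddCircle T) {r : ℝ} (hr : 0 ≤ r) :
    (haarAddCircle : Measure (AddCircle T)).real (closedBall x r) ≤ 2 * r / T := by
  have hT : 0 < T := Fact.out
  have hvol := congrArg ENNReal.toReal (volume_closedBall T (x := x) r)
  rw [volume_eq_smul_haarAddCircle, Measure.smul_apply, smul_eq_mul, ENNReal.toReal_mul,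
    ENNReal.toReal_ofReal hT.le, ENNReal.toReal_ofReal (by positivity), ← measureReal_def] at hvol
  rw [le_div_iff₀ hT, mul_comm, hvol]
  exact min_le_right _ _

lemma haarAddCircle_real_coe_image_Icc_le {r : ℝ} (hr : 0 ≤ r) :
    (haarAddCircle : Measure (AddCircle T)).real ((↑) '' Icc (-r) r) ≤ 2 * r / T :=
  (measureReal_mono (coe_image_Icc_subset_closedBall r)).trans
    (haarAddCircle_real_closedBall_le 0 hr)

lemma norm_fourier_coe_sub_one_le (n : ℤ) (t : ℝ) :
    ‖fourier n (t : AddCircle T) - 1‖ ≤ 2 * Real.pi * |n| * |t| / T := by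
  have hT : 0 < T := Fact.out
  rw [fourier_coe_apply]
  convert Real.norm_exp_I_mul_ofReal_sub_one_le (x := 2 * Real.pi * n * t / T) using 4
  · push_cast; ring
  · rw [Real.norm_eq_abs, abs_div, abs_mul, abs_mul, abs_mul, abs_of_pos hT,
      abs_of_pos Real.pi_pos, abs_two, Int.cast_abs]

end AddCircle

lemma circleConv_indicator_one (s t : Set Circle2Pi) (x : Circle2Pi) :
    circleConv (s.indicator fun _ => (1 : ℂ)) (t.indicator fun _ => (1 : ℂ)) x =
      ((s.indicator 1 ⋆[ContinuousLinearMap.mul ℝ ℝ, haarAddCircle] t.indicator 1) x : ℝ) := by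
  rw [circleConv, convolution_def, ← integral_complex_ofReal]
  refine integral_congr_ae (Filter.Eventually.of_forall fun y => ?_)
  by_cases hy : y ∈ s <;> by_cases hxy : x - y ∈ t <;> simp [hy, hxy]

theorem stmt_16_general (c : ℝ) (hc0 : 0 < c)
    (V : Set Circle2Pi) (hV : V = (fun x : ℝ => (x : Circle2Pi)) '' Set.Icc (-c) c)
    (f : Circle2Pi → ℂ) (hf : ∀ s : Circle2Pi, f s = fourier 1 s - 1)
    (v : Circle2Pi → ℂ)
    (hv : v = fun x => f x * (((Real.pi / c : ℝ) : ℂ) *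
      circleConv ((V + V).indicator fun _ => (1 : ℂ)) (V.indicator fun _ => (1 : ℂ)) x)) :
    Real.sqrt (∫ x : Circle2Pi, ‖v x‖ ^ 2 ∂haarAddCircle) ≤
      3 * c * Real.sqrt (2 * c / Real.pi) := by
  have hVV : V + V = (↑) '' Icc (-(c + c)) (c + c) := by
    rw [hV, AddCircle.coe_image_Icc_add_coe_image_Icc hc0.le hc0.le]
  have hVVV : V + V + V = (↑) '' Icc (-(c + c + c)) (c + c + c) := by
    rw [hVV, hV, AddCircle.coe_image_Icc_add_coe_image_Icc (by positivity) hc0.le]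
  have hVc : IsCompact V := hV ▸ isCompact_Icc.image (AddCircle.continuous_mk' _)
  have hμV : haarAddCircle.real V ≤ c / Real.pi := by
    rw [hV]
    exact (AddCircle.haarAddCircle_real_coe_image_Icc_le hc0.le).trans_eq (by field_simp)
  have hμVV : haarAddCircle.real (V + V) ≤ 2 * c / Real.pi := by
    rw [hVV]
    exact (AddCircle.haarAddCircle_real_coe_image_Icc_le (by positivity)).trans_eq
      (by field_simp; ring)
  have hf_le : ∀ x ∈ V + V + V, ‖f x‖ ≤ 3 * c := by
    rw [hVVV]
    rintro _ ⟨t, ht, rfl⟩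
    rw [hf]
    refine (AddCircle.norm_fourier_coe_sub_one_le 1 t).trans ?_
    field_simp
    simpa [abs_le] using ⟨by linarith [ht.1], by linarith [ht.2]⟩
  have hv_sq := integral_norm_mul_convolution_indicator_one_sq_le (𝕜 := ℂ)
    (hVc.add hVc).measurableSet hVc.measurableSet (measure_ne_top _ _) (measure_ne_top _ _)
    hμV (by positivity) hf_le
  rw [Real.sqrt_le_left (by positivity), mul_pow, Real.sq_sqrt (by positivity)]
  calc ∫ x, ‖v x‖ ^ 2 ∂haarAddCircle
      ≤ (3 * c) ^ 2 * (haarAddCircle.real (V + V) * haarAddCircle.real V / (c / Real.pi)) := by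
        simpa [hv, circleConv_indicator_one, inv_div] using hv_sq
    _ ≤ (3 * c) ^ 2 * (2 * c / Real.pi * (c / Real.pi) / (c / Real.pi)) := by gcongr
    _ = (3 * c) ^ 2 * (2 * c / Real.pi) := by field_simp

theorem stmt_16 (c : ℝ) (hc0 : 0 < c) (hc1 : c < 1)
    (V : Set Circle2Pi) (hV : V = (fun x : ℝ => (x : Circle2Pi)) '' Set.Icc (-c) c)
    (f : Circle2Pi → ℂ) (hf : ∀ s : Circle2Pi, f s = fourier 1 s - 1)
    (v : Circle2Pi → ℂ)
    (hv : v = fun x => f x * (((Real.pi / c : ℝ) : ℂ) *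
      circleConv ((V + V).indicator fun _ => (1 : ℂ)) (V.indicator fun _ => (1 : ℂ)) x)) :
    Real.sqrt (∫ x : Circle2Pi, ‖v x‖ ^ 2 ∂haarAddCircle) ≤
      3 * c * Real.sqrt (2 * c / Real.pi) :=
  stmt_16_general c hc0 V hV f hf v hv
end
end
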